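/- (Extension of Theorem 1 stated in the paper) In the IRS-aided wireless-powered MEC system where a single static IRS beamforming vector is used for the entire frame, TDMA offloading and NOMA offloading achieve the same optimal computation rate: R_TDMA^1 = R_NOMA^1. -/

import Mathlib

/-!
A NOMA schedule `(τ₁, p)` is reproduced exactly by TDMA: give device `k` the slot `τ₁ pₖgₖ / S`
(with `S = ∑ⱼ pⱼgⱼ`) and the power `S / gₖ`, so that every device transmits at the NOMA sum SNR
and uses no more energy. Conversely a TDMA schedule `(τ, p)` is dominated by the NOMA schedule
with `τ₁ = ∑ₖ τₖ` and powers `τₖpₖ / τ₁`: by concavity of `y ↦ log(1 + y)`, the time-weighted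
TDMA rate is at most `τ₁` times the rate at the time-averaged SNR. So every value of each problem
is bounded by a value of the other.
-/

open Finset

/-- Effective channel power gain of device `k` under IRS beamforming vector `v`. -/
noncomputable def gain {K N : ℕ} (h : Fin K → ℂ) (q : Fin K → Fin N → ℂ)
    (k : Fin K) (v : Fin N → ℂ) : ℝ :=
  ‖(starRingEnd ℂ) (h k) + ∑ n, (starRingEnd ℂ) (q k n) * v n‖ ^ 2

/-- Optimal computation rate of TDMA offloading with one static IRS beamforming vector
(Case 1). -/
noncomputable def RTDMA1 {K N : ℕ} (h : Fin K → ℂ) (q : Fin K → Fin N → ℂ)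
    (B T C γ η P σ2 : ℝ) : ℝ :=
  sSup {r : ℝ | ∃ (v₀ : Fin N → ℂ) (τ₀ : ℝ) (τ p f : Fin K → ℝ),
    (∀ n, ‖v₀ n‖ = 1) ∧ 0 ≤ τ₀ ∧ (∀ k, 0 ≤ τ k) ∧
    (∀ k, 0 ≤ p k) ∧ (∀ k, 0 ≤ f k) ∧ τ₀ + ∑ k, τ k ≤ T ∧
    (∀ k, τ k * p k + T * γ * f k ^ 3 ≤ τ₀ * η * P * gain h q k v₀) ∧
    r = B * ∑ k, τ k * Real.logb 2 (1 + p k * gain h q k v₀ / σ2) + ∑ k, T * f k / C}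

/-- Optimal computation rate of NOMA offloading with one static IRS beamforming vector
(Case 1). -/
noncomputable def RNOMA1 {K N : ℕ} (h : Fin K → ℂ) (q : Fin K → Fin N → ℂ)
    (B T C γ η P σ2 : ℝ) : ℝ :=
  sSup {r : ℝ | ∃ (v₀ : Fin N → ℂ) (τ₀ τ₁ : ℝ) (p f : Fin K → ℝ),
    (∀ n, ‖v₀ n‖ = 1) ∧ 0 ≤ τ₀ ∧ 0 ≤ τ₁ ∧
    (∀ k, 0 ≤ p k) ∧ (∀ k, 0 ≤ f k) ∧ τ₀ + τ₁ ≤ T ∧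
    (∀ k, τ₁ * p k + T * γ * f k ^ 3 ≤ τ₀ * η * P * gain h q k v₀) ∧
    r = B * τ₁ * Real.logb 2 (1 + (∑ k, p k * gain h q k v₀) / σ2) + ∑ k, T * f k / C}

theorem ConcaveOn.sum_mul_map_le {ι : Type*} {s : Finset ι} {D : Set ℝ} {f : ℝ → ℝ}
    (hf : ConcaveOn ℝ D f) {w x : ι → ℝ} (hw : ∀ i ∈ s, 0 ≤ w i) (hx : ∀ i ∈ s, x i ∈ D) :
    ∑ i ∈ s, w i * f (x i) ≤ (∑ i ∈ s, w i) * f ((∑ i ∈ s, w i * x i) / ∑ i ∈ s, w i) := by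
  rcases (sum_nonneg hw).eq_or_lt with hzero | hpos
  · have hw0 : ∀ i ∈ s, w i = 0 := (sum_eq_zero_iff_of_nonneg hw).1 hzero.symm
    rw [← hzero, zero_mul, sum_eq_zero fun i hi => by rw [hw0 i hi, zero_mul]]
  · have := hf.le_map_centerMass hw hpos hx
    simp only [centerMass, smul_eq_mul, Function.comp_apply] at this
    rw [inv_mul_eq_div, div_le_iff₀' hpos] at this
    rwa [div_eq_inv_mul]

theorem concaveOn_logb_one_add {b : ℝ} (hb : 1 < b) :
    ConcaveOn ℝ (Set.Ioi (-1)) fun y => Real.logb b (1 + y) := by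
  have h := (strictConcaveOn_log_Ioi.concaveOn.translate_right 1).smul
    (inv_nonneg.2 (Real.log_pos hb).le)
  have hD : (fun z : ℝ => 1 + z) ⁻¹' Set.Ioi 0 = Set.Ioi (-1) := by
    ext z; simp only [Set.mem_preimage, Set.mem_Ioi]; constructor <;> intro <;> linarith
  rw [hD] at h
  exact h.congr fun y _ => by simp [Real.logb, div_eq_inv_mul]

theorem div_mul_le_of_nonneg {a b : ℝ} (ha : 0 ≤ a) : a / b * b ≤ a := by
  rcases eq_or_ne b 0 with rfl | hb
  · simpa
  · rw [div_mul_cancel₀ _ hb]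

theorem mul_div_mul_div_le {a b c : ℝ} (ha : 0 ≤ a) : a * b / c * (c / b) ≤ a := by
  rcases eq_or_ne b 0 with rfl | hb
  · simpa
  rcases eq_or_ne c 0 with rfl | hc
  · simpa
  exact le_of_eq (by field_simp)

section Schedules

variable {ι : Type*} [Fintype ι]

noncomputable def tdmaTime (τ₁ : ℝ) (p g : ι → ℝ) (k : ι) : ℝ :=
  τ₁ * (p k * g k) / ∑ j, p j * g j

/-- A device with `g k = 0` gets the junk power `S / 0 = 0`, which is harmless: its slot
`tdmaTime τ₁ p g k` is empty. -/
noncomputable def tdmaPower (p g : ι → ℝ) (k : ι) : ℝ :=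
  (∑ j, p j * g j) / g k

noncomputable def nomaPower (τ p : ι → ℝ) (k : ι) : ℝ :=
  τ k * p k / ∑ j, τ j

variable {τ₁ : ℝ} {τ p g : ι → ℝ}

theorem tdmaTime_nonneg (hτ₁ : 0 ≤ τ₁) (hp : ∀ k, 0 ≤ p k) (hg : ∀ k, 0 ≤ g k) (k : ι) :
    0 ≤ tdmaTime τ₁ p g k :=
  div_nonneg (mul_nonneg hτ₁ (mul_nonneg (hp k) (hg k)))
    (sum_nonneg fun j _ => mul_nonneg (hp j) (hg j))

theorem tdmaPower_nonneg (hp : ∀ k, 0 ≤ p k) (hg : ∀ k, 0 ≤ g k) (k : ι) :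
    0 ≤ tdmaPower p g k :=
  div_nonneg (sum_nonneg fun j _ => mul_nonneg (hp j) (hg j)) (hg k)

theorem sum_tdmaTime_le (hτ₁ : 0 ≤ τ₁) : ∑ k, tdmaTime τ₁ p g k ≤ τ₁ := by
  unfold tdmaTime
  rw [← sum_div, ← mul_sum]
  rcases eq_or_ne (∑ j, p j * g j) 0 with hS | hS
  · simpa [hS] using hτ₁
  · rw [mul_div_cancel_right₀ _ hS]

theorem tdmaTime_mul_tdmaPower_le (hτ₁ : 0 ≤ τ₁) (hp : ∀ k, 0 ≤ p k) (k : ι) :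
    tdmaTime τ₁ p g k * tdmaPower p g k ≤ τ₁ * p k := by
  unfold tdmaTime tdmaPower
  rw [← mul_assoc]
  exact mul_div_mul_div_le (mul_nonneg hτ₁ (hp k))

theorem sum_tdmaTime_mul_logb (b σ2 : ℝ) :
    ∑ k, tdmaTime τ₁ p g k * Real.logb b (1 + tdmaPower p g k * g k / σ2) =
      τ₁ * Real.logb b (1 + (∑ k, p k * g k) / σ2) := by
  set S := ∑ j, p j * g j
  have hterm (k : ι) : tdmaTime τ₁ p g k * Real.logb b (1 + tdmaPower p g k * g k / σ2) =
      tdmaTime τ₁ p g k * Real.logb b (1 + S / σ2) := by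
    rcases eq_or_ne (g k) 0 with hg | hg
    · simp [tdmaTime, hg]
    · rw [tdmaPower, div_mul_cancel₀ _ hg]
  rw [sum_congr rfl fun k _ => hterm k, ← sum_mul]
  unfold tdmaTime
  rw [← sum_div, ← mul_sum]
  rcases eq_or_ne S 0 with hS | hS
  · simp [hS]
  · rw [mul_div_cancel_right₀ _ hS]

theorem sum_mul_nomaPower_le (hτ : ∀ k, 0 ≤ τ k) (hp : ∀ k, 0 ≤ p k) (k : ι) :
    (∑ j, τ j) * nomaPower τ p k ≤ τ k * p k := by
  rw [nomaPower, mul_comm]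
  exact div_mul_le_of_nonneg (mul_nonneg (hτ k) (hp k))

theorem nomaPower_nonneg (hτ : ∀ k, 0 ≤ τ k) (hp : ∀ k, 0 ≤ p k) (k : ι) :
    0 ≤ nomaPower τ p k :=
  div_nonneg (mul_nonneg (hτ k) (hp k)) (sum_nonneg fun j _ => hτ j)

theorem sum_mul_logb_le_nomaPower {b σ2 : ℝ} (hb : 1 < b) (hσ : 0 ≤ σ2)
    (hτ : ∀ k, 0 ≤ τ k) (hp : ∀ k, 0 ≤ p k) (hg : ∀ k, 0 ≤ g k) :
    ∑ k, τ k * Real.logb b (1 + p k * g k / σ2) ≤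
      (∑ k, τ k) * Real.logb b (1 + (∑ k, nomaPower τ p k * g k) / σ2) := by
  have hSNR : (∑ k, τ k * (p k * g k / σ2)) / ∑ k, τ k = (∑ k, nomaPower τ p k * g k) / σ2 := by
    simp only [nomaPower, sum_div]
    exact sum_congr rfl fun k _ => by ring
  rw [← hSNR]
  refine (concaveOn_logb_one_add hb).sum_mul_map_le (fun k _ => hτ k) fun k _ => ?_
  have : 0 ≤ p k * g k / σ2 := div_nonneg (mul_nonneg (hp k) (hg k)) hσ
  exact Set.mem_Ioi.2 (by linarith)

end Schedules

section Rates

variable {K N : ℕ} (h : Fin K → ℂ) (q : Fin K → Fin N → ℂ) (B T C γ η P σ2 : ℝ)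

theorem gain_nonneg (k : Fin K) (v : Fin N → ℂ) : 0 ≤ gain h q k v := sq_nonneg _

def tdmaRates : Set ℝ :=
  {r : ℝ | ∃ (v₀ : Fin N → ℂ) (τ₀ : ℝ) (τ p f : Fin K → ℝ),
    (∀ n, ‖v₀ n‖ = 1) ∧ 0 ≤ τ₀ ∧ (∀ k, 0 ≤ τ k) ∧
    (∀ k, 0 ≤ p k) ∧ (∀ k, 0 ≤ f k) ∧ τ₀ + ∑ k, τ k ≤ T ∧
    (∀ k, τ k * p k + T * γ * f k ^ 3 ≤ τ₀ * η * P * gain h q k v₀) ∧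
    r = B * ∑ k, τ k * Real.logb 2 (1 + p k * gain h q k v₀ / σ2) + ∑ k, T * f k / C}

def nomaRates : Set ℝ :=
  {r : ℝ | ∃ (v₀ : Fin N → ℂ) (τ₀ τ₁ : ℝ) (p f : Fin K → ℝ),
    (∀ n, ‖v₀ n‖ = 1) ∧ 0 ≤ τ₀ ∧ 0 ≤ τ₁ ∧
    (∀ k, 0 ≤ p k) ∧ (∀ k, 0 ≤ f k) ∧ τ₀ + τ₁ ≤ T ∧
    (∀ k, τ₁ * p k + T * γ * f k ^ 3 ≤ τ₀ * η * P * gain h q k v₀) ∧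
    r = B * τ₁ * Real.logb 2 (1 + (∑ k, p k * gain h q k v₀) / σ2) + ∑ k, T * f k / C}

theorem nomaRates_subset_tdmaRates :
    nomaRates h q B T C γ η P σ2 ⊆ tdmaRates h q B T C γ η P σ2 := by
  rintro r ⟨v₀, τ₀, τ₁, p, f, hv, hτ₀, hτ₁, hp, hf, htime, henergy, rfl⟩
  set g := fun k => gain h q k v₀
  have hg : ∀ k, 0 ≤ g k := fun k => gain_nonneg h q k v₀
  refine ⟨v₀, τ₀, tdmaTime τ₁ p g, tdmaPower p g, f, hv, hτ₀, tdmaTime_nonneg hτ₁ hp hg,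
    tdmaPower_nonneg hp hg, hf, ?_, fun k => ?_, ?_⟩
  · linarith [sum_tdmaTime_le (p := p) (g := g) hτ₁]
  · linarith [henergy k, tdmaTime_mul_tdmaPower_le (g := g) hτ₁ hp k]
  · rw [sum_tdmaTime_mul_logb, mul_assoc]

variable {B σ2} in
theorem exists_mem_nomaRates_ge (hB : 0 ≤ B) (hσ : 0 ≤ σ2) :
    ∀ r ∈ tdmaRates h q B T C γ η P σ2, ∃ r' ∈ nomaRates h q B T C γ η P σ2, r ≤ r' := by
  rintro r ⟨v₀, τ₀, τ, p, f, hv, hτ₀, hτ, hp, hf, htime, henergy, rfl⟩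
  set g := fun k => gain h q k v₀
  have hg : ∀ k, 0 ≤ g k := fun k => gain_nonneg h q k v₀
  refine ⟨_, ⟨v₀, τ₀, ∑ k, τ k, nomaPower τ p, f, hv, hτ₀, sum_nonneg fun k _ => hτ k,
    nomaPower_nonneg hτ hp, hf, htime, fun k => ?_, rfl⟩, ?_⟩
  · linarith [henergy k, sum_mul_nomaPower_le hτ hp k]
  · rw [mul_assoc]
    gcongr
    exact sum_mul_logb_le_nomaPower one_lt_two hσ hτ hp hg

end Rates

theorem RTDMA1_eq_RNOMA1_general {K N : ℕ}
    (h : Fin K → ℂ) (q : Fin K → Fin N → ℂ) (B T C γ η P σ2 : ℝ)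
    (hB : 0 < B) (hσ : 0 < σ2) :
    RTDMA1 h q B T C γ η P σ2 = RNOMA1 h q B T C γ η P σ2 := by
  show sSup (tdmaRates h q B T C γ η P σ2) = sSup (nomaRates h q B T C γ η P σ2)
  exact csSup_eq_csSup_of_forall_exists_le (exists_mem_nomaRates_ge h q T C γ η P hB.le hσ.le)
    fun r hr => ⟨r, nomaRates_subset_tdmaRates h q B T C γ η P σ2 hr, le_rfl⟩

/-- Extension of Theorem 1: `R_TDMA^{case1} = R_NOMA^{case1}`. -/
theorem RTDMA1_eq_RNOMA1 {K N : ℕ} (hK : 1 ≤ K) (hN : 1 ≤ N)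
    (h : Fin K → ℂ) (q : Fin K → Fin N → ℂ) (B T C γ η P σ2 : ℝ)
    (hB : 0 < B) (hT : 0 < T) (hC : 0 < C) (hγ : 0 < γ)
    (hη : 0 < η) (hP : 0 < P) (hσ : 0 < σ2) :
    RTDMA1 h q B T C γ η P σ2 = RNOMA1 h q B T C γ η P σ2 :=
  RTDMA1_eq_RNOMA1_general h q B T C γ η P σ2 hB hσ
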